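/- arXiv:1203.6468 — 3 statements merged into one kernel-verified Lean document; each statement's English description precedes it below -/
import Mathlib

section
/- Let M be an e-BZ datum associated to I = [n+1, n+m], and define M^♯ by (M^♯)_k := M_{Ĩ∖k} − Σ_{i∈I} M_{[i+1,n+m+1]} ⟨h_i, k⟩. Then M^♯ is again an e-BZ datum: it satisfies the edge inequalities (BZ-1), the tropical Plücker relations (BZ-2), and the normalization (M^♯)_{[n+1,i]} = 0 for all i ∈ I. -/
/-- The extended interval Ĩ = [n+1, n+m+1]. -/
noncomputable def Itilde (n m : ℤ) : Finset ℤ := Finset.Icc (n + 1) (n + m + 1)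

/-- The pairing ⟨h_i, k⟩ ∈ {−1,0,1} determined by membership of i, i+1 in k. -/
def pairH (i : ℤ) (k : Finset ℤ) : ℤ :=
  if i ∈ k ∧ i + 1 ∉ k then 1 else if i ∉ k ∧ i + 1 ∈ k then -1 else 0

/-- Edge inequalities (BZ-1). -/
def BZ1 (n m : ℤ) (M : Finset ℤ → ℤ) : Prop :=
  ∀ (i j : ℤ) (k : Finset ℤ), i ∈ Itilde n m → j ∈ Itilde n m → i ≠ j →
    k ⊆ Itilde n m → i ∉ k → j ∉ k →
    M (insert i k) + M (insert j k) ≤ M (insert i (insert j k)) + M k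

/-- Tropical Plücker relations (BZ-2). -/
def BZ2 (n m : ℤ) (M : Finset ℤ → ℤ) : Prop :=
  ∀ (i j l : ℤ) (k : Finset ℤ), i ∈ Itilde n m → j ∈ Itilde n m → l ∈ Itilde n m →
    i < j → j < l → k ⊆ Itilde n m → i ∉ k → j ∉ k → l ∉ k →
    M (insert i (insert l k)) + M (insert j k) =
      min (M (insert i (insert j k)) + M (insert l k))
        (M (insert j (insert l k)) + M (insert i k))

/-- The e-normalization condition (BZ-0). -/
def eNorm (n m : ℤ) (M : Finset ℤ → ℤ) : Prop :=
  ∀ i ∈ Finset.Icc (n + 1) (n + m), M (Finset.Icc (n + 1) i) = 0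

/-- e-BZ datum on the interval I = [n+1, n+m], with the conventions M_∅ = M_Ĩ = 0. -/
def eBZ (n m : ℤ) (M : Finset ℤ → ℤ) : Prop :=
  M ∅ = 0 ∧ M (Itilde n m) = 0 ∧ BZ1 n m M ∧ BZ2 n m M ∧ eNorm n m M

/-- wt^∨(M) paired with a Maya diagram k. -/
noncomputable def wtv (n m : ℤ) (M : Finset ℤ → ℤ) (k : Finset ℤ) : ℤ :=
  ∑ i ∈ Finset.Icc (n + 1) (n + m), M (Finset.Icc (i + 1) (n + m + 1)) * pairH i k

/-- The sharp operation M ↦ M^♯. -/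
noncomputable def sharp (n m : ℤ) (M : Finset ℤ → ℤ) : Finset ℤ → ℤ :=
  fun k => M (Itilde n m \ k) - wtv n m M k

/-
Both halves of `M ↦ M^♯` preserve (BZ-1) and (BZ-2). Passing to complements in `Ĩ` turns each
relation into itself with the roles of the six terms permuted. The correction term `wtv` is additive
in `k` (each `⟨h_i, k⟩ = [i ∈ k] - [i + 1 ∈ k]` is), and in every relation both sides involve the
same multiset of elements, so subtracting an additive function changes both sides equally.
-/

lemma Finset.sdiff_eq_insert_sdiff_insert {α : Type*} [DecidableEq α] {T s : Finset α} {a : α}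
    (ha : a ∈ T) (hs : a ∉ s) :
    T \ s = insert a (T \ insert a s) := by
  rw [Finset.sdiff_insert, Finset.insert_erase (Finset.mem_sdiff.2 ⟨ha, hs⟩)]

lemma BZ1.compl {n m : ℤ} {M : Finset ℤ → ℤ} (h : BZ1 n m M) :
    BZ1 n m (fun k => M (Itilde n m \ k)) := by
  intro i j k hi hj hij _ hik hjk
  set K := Itilde n m \ insert i (insert j k) with hK
  have hjik : j ∉ insert i k := by simp [hjk, hij.symm]
  have hij_k : Itilde n m \ insert i k = insert j K := by
    rw [Finset.sdiff_eq_insert_sdiff_insert hj hjik, Finset.insert_comm]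
  have hji_k : Itilde n m \ insert j k = insert i K :=
    Finset.sdiff_eq_insert_sdiff_insert hi (by simp [hik, hij])
  have h_k : Itilde n m \ k = insert i (insert j K) := by
    rw [Finset.sdiff_eq_insert_sdiff_insert hi hik, hij_k]
  simp only [hij_k, hji_k, h_k, ← hK]
  have := h i j K hi hj hij Finset.sdiff_subset (by simp [K]) (by simp [K])
  omega

lemma BZ2.compl {n m : ℤ} {M : Finset ℤ → ℤ} (h : BZ2 n m M) :
    BZ2 n m (fun k => M (Itilde n m \ k)) := by
  intro i j l k hi hj hl hij hjl _ hik hjk hlk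
  have hil : i < l := hij.trans hjl
  set K := Itilde n m \ insert i (insert j (insert l k))
  have c_il : Itilde n m \ insert i (insert l k) = insert j K := by
    rw [Finset.sdiff_eq_insert_sdiff_insert hj (by simp [hjk, hij.ne', hjl.ne]),
      Finset.insert_comm j i]
  have c_ij : Itilde n m \ insert i (insert j k) = insert l K := by
    rw [Finset.sdiff_eq_insert_sdiff_insert hl (by simp [hlk, hil.ne', hjl.ne']),
      Finset.insert_comm l i, Finset.insert_comm l j]
  have c_jl : Itilde n m \ insert j (insert l k) = insert i K :=
    Finset.sdiff_eq_insert_sdiff_insert hi (by simp [hik, hij.ne, hil.ne])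
  have c_j : Itilde n m \ insert j k = insert i (insert l K) := by
    rw [Finset.sdiff_eq_insert_sdiff_insert hi (by simp [hik, hij.ne]), c_ij]
  have c_l : Itilde n m \ insert l k = insert i (insert j K) := by
    rw [Finset.sdiff_eq_insert_sdiff_insert hi (by simp [hik, hil.ne]), c_il]
  have c_i : Itilde n m \ insert i k = insert j (insert l K) := by
    rw [Finset.sdiff_eq_insert_sdiff_insert hj (by simp [hjk, hij.ne']), Finset.insert_comm j i,
      c_ij]
  simp only [c_il, c_ij, c_jl, c_j, c_l, c_i]
  have := h i j l K hi hj hl hij hjl Finset.sdiff_subset (by simp [K]) (by simp [K]) (by simp [K])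
  omega

lemma BZ1.sub_sum {n m : ℤ} {M : Finset ℤ → ℤ} (h : BZ1 n m M) (w : ℤ → ℤ) :
    BZ1 n m (fun k => M k - ∑ x ∈ k, w x) := by
  intro i j k hi hj hij hk hik hjk
  have := h i j k hi hj hij hk hik hjk
  simp only [Finset.sum_insert hik, Finset.sum_insert hjk,
    Finset.sum_insert (show i ∉ insert j k by simp [hik, hij])]
  omega

lemma BZ2.sub_sum {n m : ℤ} {M : Finset ℤ → ℤ} (h : BZ2 n m M) (w : ℤ → ℤ) :
    BZ2 n m (fun k => M k - ∑ x ∈ k, w x) := by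
  intro i j l k hi hj hl hij hjl hk hik hjk hlk
  have := h i j l k hi hj hl hij hjl hk hik hjk hlk
  simp only [Finset.sum_insert hik, Finset.sum_insert hjk, Finset.sum_insert hlk,
    Finset.sum_insert (show i ∉ insert l k by simp [hik, (hij.trans hjl).ne]),
    Finset.sum_insert (show i ∉ insert j k by simp [hik, hij.ne]),
    Finset.sum_insert (show j ∉ insert l k by simp [hjk, hjl.ne])]
  omega

lemma pairH_eq_sum_pairH_singleton (i : ℤ) (k : Finset ℤ) :
    pairH i k = ∑ x ∈ k, pairH i {x} := by
  have hind : ∀ a : ℤ, (if a ∈ k then (1 : ℤ) else 0) = ∑ x ∈ k, if a = x then 1 else 0 := by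
    intro a; rw [Finset.sum_ite_eq]
  have hpair : ∀ s : Finset ℤ,
      pairH i s = (if i ∈ s then 1 else 0) - (if i + 1 ∈ s then 1 else 0) := by
    intro s; unfold pairH; split_ifs <;> simp_all
  rw [hpair, hind, hind, ← Finset.sum_sub_distrib]
  refine Finset.sum_congr rfl fun x _ => ?_
  simp [hpair]

lemma wtv_eq_sum_singleton (n m : ℤ) (M : Finset ℤ → ℤ) (k : Finset ℤ) :
    wtv n m M k = ∑ x ∈ k, wtv n m M {x} := by
  simp only [wtv, pairH_eq_sum_pairH_singleton _ k, Finset.mul_sum]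
  exact Finset.sum_comm

lemma wtv_Itilde (n m : ℤ) (M : Finset ℤ → ℤ) : wtv n m M (Itilde n m) = 0 := by
  refine Finset.sum_eq_zero fun i hi => ?_
  rw [Finset.mem_Icc] at hi
  have : i ∈ Itilde n m ∧ i + 1 ∈ Itilde n m := by simp only [Itilde, Finset.mem_Icc]; omega
  simp [pairH, this]

lemma wtv_Icc (n m : ℤ) (M : Finset ℤ → ℤ) {i : ℤ} (hi : i ∈ Finset.Icc (n + 1) (n + m)) :
    wtv n m M (Finset.Icc (n + 1) i) = M (Finset.Icc (i + 1) (n + m + 1)) := by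
  have hni : n + 1 ≤ i := (Finset.mem_Icc.1 hi).1
  rw [wtv, Finset.sum_eq_single_of_mem i hi]
  · simp [pairH, hni]
  · intro b hb hbi
    have hnb : n + 1 ≤ b := (Finset.mem_Icc.1 hb).1
    have : pairH b (Finset.Icc (n + 1) i) = 0 := by
      simp only [pairH, Finset.mem_Icc]
      split_ifs <;> omega
    rw [this, mul_zero]

lemma Itilde_sdiff_Icc {n m i : ℤ} (hi : i ∈ Finset.Icc (n + 1) (n + m)) :
    Itilde n m \ Finset.Icc (n + 1) i = Finset.Icc (i + 1) (n + m + 1) := by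
  have := Finset.mem_Icc.1 hi
  ext x
  simp only [Itilde, Finset.mem_sdiff, Finset.mem_Icc]
  omega

lemma sharp_eq (n m : ℤ) (M : Finset ℤ → ℤ) :
    sharp n m M = fun k => M (Itilde n m \ k) - ∑ x ∈ k, wtv n m M {x} := by
  funext k
  rw [sharp, wtv_eq_sum_singleton]

theorem stmt5_general (n m : ℤ) (M : Finset ℤ → ℤ) (hM : eBZ n m M) :
    eBZ n m (sharp n m M) := by
  obtain ⟨h0, hI, h1, h2, -⟩ := hM
  refine ⟨?_, ?_, ?_, ?_, ?_⟩
  · simp [sharp_eq, hI]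
  · simp [sharp, h0, wtv_Itilde]
  · rw [sharp_eq]; exact h1.compl.sub_sum _
  · rw [sharp_eq]; exact h2.compl.sub_sum _
  · intro i hi
    simp [sharp, Itilde_sdiff_Icc hi, wtv_Icc n m M hi]

/-- The sharp of an e-BZ datum is again an e-BZ datum. -/
theorem stmt5 (n m : ℤ) (hm : 0 < m) (M : Finset ℤ → ℤ) (hM : eBZ n m M) :
    eBZ n m (sharp n m M) :=
  stmt5_general n m M hM
end

section
/- Let M be an e-BZ datum on I = [n+1, n+m] such that M_{[n+1,i−1]∪{i+1}} = 0 for every i ∈ I (i.e., ε_i(M) = 0 for all i). Then M_k = 0 for every Maya diagram k ⊆ Ĩ. -/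
open Finset

def excess (a : ℤ) (k : Finset ℤ) : ℤ := ∑ x ∈ k, x - ∑ j ∈ range #k, (a + j)

section Excess

variable {a i t x y : ℤ} {k : Finset ℤ}

lemma excess_insert (hx : x ∉ k) : excess a (insert x k) = excess a k + x - (a + #k) := by
  simp only [excess, sum_insert hx, card_insert_of_notMem hx, sum_range_succ]
  ring

lemma excess_erase (hx : x ∈ k) : excess a (k.erase x) = excess a k - x + (a + #k - 1) := by
  have h := excess_insert (a := a) (notMem_erase x k)
  rw [insert_erase hx, cast_card_erase_of_mem hx] at h
  linarith

lemma excess_insert_erase (hx : x ∉ k) (hy : y ∈ k) :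
    excess a (insert x (k.erase y)) = excess a k + x - y := by
  rw [excess_insert (fun h => hx (mem_of_mem_erase h)), excess_erase hy, cast_card_erase_of_mem hy]
  ring

lemma excess_nonneg (hk : ∀ x ∈ k, a ≤ x) : 0 ≤ excess a k := by
  induction k using Finset.induction_on_max with
  | empty => simp [excess]
  | insert b s hlt ih =>
    have hb : b ∉ s := fun h => lt_irrefl b (hlt b h)
    have hcard := card_le_card fun x hx =>
      mem_Ico.mpr ⟨hk x (mem_insert_of_mem hx), hlt x hx⟩
    rw [Int.card_Ico] at hcard
    have := ih fun x hx => hk x (mem_insert_of_mem hx)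
    have := hk b (mem_insert_self b s)
    rw [excess_insert hb]
    omega

end Excess

section Gap

variable {a i t : ℤ} {k : Finset ℤ}

lemma lt_add_card_of_Ico_subset (hlow : Ico a i ⊆ k) (ht : t ∈ k) (hit : i ≤ t) :
    i < a + #k := by
  have := card_le_card (insert_subset ht hlow)
  rw [card_insert_of_notMem fun h => (mem_Ico.mp h).2.not_ge hit, Int.card_Ico] at this
  omega

lemma add_card_le_of_subset_Icc (hk : k ⊆ Icc a t) (hi : i ∈ Icc a t) (hik : i ∉ k) :
    a + #k ≤ t := by
  have hsub : k ⊆ (Icc a t).erase i := fun x hx => mem_erase.mpr ⟨fun h => hik (h ▸ hx), hk hx⟩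
  have := card_le_card hsub
  rw [card_erase_of_mem hi, Int.card_Icc] at this
  have := mem_Icc.mp hi
  omega

lemma eq_insert_Icc_of_first_gap (hk : ∀ x ∈ k, a ≤ x ∧ x ≤ i + 1) (hik : i ∉ k)
    (hi1 : i + 1 ∈ k) (hlow : Ico a i ⊆ k) : k = insert (i + 1) (Icc a (i - 1)) := by
  ext x
  simp only [mem_insert, mem_Icc]
  constructor
  · intro hx
    have := hk x hx
    have : x ≠ i := fun h => hik (h ▸ hx)
    omega
  · rintro (rfl | ⟨hax, hxi⟩)
    · exact hi1
    · exact hlow (mem_Ico.mpr ⟨hax, by omega⟩)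

end Gap

section BZ

variable {n m : ℤ} {M : Finset ℤ → ℤ} {i j l : ℤ} {k : Finset ℤ}

lemma mem_Itilde : i ∈ Itilde n m ↔ n + 1 ≤ i ∧ i ≤ n + m + 1 := mem_Icc

lemma eBZ.apply_Icc_eq_zero (hM : eBZ n m M) {t : ℤ} (ht : t ≤ n + m + 1) : M (Icc (n + 1) t) = 0 := by
  obtain ⟨hEmpty, hFull, -, -, hNorm⟩ := hM
  rcases lt_or_ge t (n + 1) with hlt | hge
  · rwa [Icc_eq_empty (by omega)]
  rcases eq_or_lt_of_le ht with rfl | hlt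
  · exact hFull
  · exact hNorm t (mem_Icc.mpr ⟨hge, by omega⟩)

lemma BZ1.add_le_insert_erase (h : BZ1 n m M) (hk : k ⊆ Itilde n m) (hi : i ∈ Itilde n m)
    (hik : i ∉ k) (hj : j ∈ k) :
    M k + M (insert i (k.erase j)) ≤ M (insert i k) + M (k.erase j) := by
  have := h i j (k.erase j) hi (hk hj) (fun h => hik (h ▸ hj)) ((erase_subset j k).trans hk)
    (fun h => hik (mem_of_mem_erase h)) (notMem_erase j k)
  rw [insert_erase hj] at this
  linarith

lemma BZ2.add_le_of_notMem (h : BZ2 n m M) (hk : k ⊆ Itilde n m) (hi : i ∈ Itilde n m)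
    (hj : j ∈ Itilde n m) (hij : i < j) (hjl : j < l) (hik : i ∉ k) (hjk : j ∉ k) (hlk : l ∈ k) :
    M (insert i k) + M (insert j (k.erase l)) ≤ M (insert i (insert j (k.erase l))) + M k := by
  have := h i j l (k.erase l) hi hj (hk hlk) hij hjl ((erase_subset l k).trans hk)
    (fun h => hik (mem_of_mem_erase h)) (fun h => hjk (mem_of_mem_erase h)) (notMem_erase l k)
  rw [insert_erase hlk] at this
  exact this.le.trans (min_le_left _ _)

lemma BZ2.add_le_of_mem (h : BZ2 n m M) (hk : k ⊆ Itilde n m) (hi : i ∈ Itilde n m)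
    (hij : i < j) (hjl : j < l) (hik : i ∉ k) (hjk : j ∈ k) (hlk : l ∈ k) :
    M (insert i (k.erase j)) + M (k.erase l) ≤ M k + M (insert i ((k.erase l).erase j)) := by
  have hjk' : j ∈ k.erase l := mem_erase.mpr ⟨hjl.ne, hjk⟩
  have := h i j l ((k.erase l).erase j) hi (hk hjk) (hk hlk) hij hjl
    ((erase_subset _ _).trans ((erase_subset l k).trans hk))
    (fun h => hik (mem_of_mem_erase (mem_of_mem_erase h))) (notMem_erase j _)
    (fun h => notMem_erase l k (mem_of_mem_erase h))
  rw [insert_erase hjk', insert_comm j l, insert_erase hjk', insert_erase hlk,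
    erase_right_comm (a := l) (b := j), insert_erase (mem_erase.mpr ⟨hjl.ne', hlk⟩)] at this
  rw [this, erase_right_comm (a := l) (b := j)]
  exact min_le_right _ _

lemma eBZ.eq_zero_of_first_gap (hM : eBZ n m M)
    (hz : ∀ i ∈ Icc (n + 1) (n + m), M (insert (i + 1) (Icc (n + 1) (i - 1))) = 0)
    (hk : k ⊆ Itilde n m) {t : ℤ} (ht : t ∈ k) (hmax : ∀ x ∈ k, x ≤ t) (hik : i ∉ k)
    (hni : n + 1 ≤ i) (hit : i < t) (hlow : Ico (n + 1) i ⊆ k)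
    (ih : ∀ k' ⊆ Itilde n m, excess (n + 1) k' < excess (n + 1) k → M k' = 0) : M k = 0 := by
  obtain ⟨-, -, hBZ1, hBZ2, -⟩ := hM
  have hbound : ∀ x ∈ k, n + 1 ≤ x ∧ x ≤ t := fun x hx => ⟨(mem_Itilde.mp (hk hx)).1, hmax x hx⟩
  have hgap_lt : i < n + 1 + #k := lt_add_card_of_Ico_subset hlow ht hit.le
  have hmax_ge : n + 1 + #k ≤ t := add_card_le_of_subset_Icc
    (fun x hx => mem_Icc.mpr (hbound x hx)) (mem_Icc.mpr ⟨hni, hit.le⟩) hik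
  have htI := mem_Itilde.mp (hk ht)
  have hiI : i ∈ Itilde n m := mem_Itilde.mpr ⟨hni, by omega⟩
  have hi1I : i + 1 ∈ Itilde n m := mem_Itilde.mpr ⟨by omega, by omega⟩
  have hkt : k.erase t ⊆ Itilde n m := (erase_subset t k).trans hk
  have hik' : i ∉ k.erase t := fun h => hik (mem_of_mem_erase h)
  have hz_erase : M (k.erase t) = 0 := ih _ hkt (by rw [excess_erase ht]; omega)
  have hz_exchange : M (insert i (k.erase t)) = 0 :=
    ih _ (insert_subset hiI hkt) (by rw [excess_insert_erase hik ht]; omega)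
  have hz_insert : M (insert i k) = 0 :=
    ih _ (insert_subset hiI hk) (by rw [excess_insert hik]; omega)
  have hle : M k ≤ 0 := by
    have := hBZ1.add_le_insert_erase hk hiI hik ht
    rw [hz_erase, hz_exchange, hz_insert] at this
    linarith
  suffices 0 ≤ M k by omega
  by_cases hi1 : i + 1 ∈ k
  · rcases eq_or_lt_of_le (show i + 1 ≤ t by omega) with rfl | hi1t
    · rw [eq_insert_Icc_of_first_gap hbound hik hi1 hlow, hz i (mem_Icc.mpr ⟨hni, by omega⟩)]
    have hi1t' : i + 1 ∈ k.erase t := mem_erase.mpr ⟨hi1t.ne, hi1⟩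
    have := hBZ2.add_le_of_mem hk hiI (lt_add_one i) hi1t hik hi1 ht
    rw [hz_erase, ih _ (insert_subset hiI ((erase_subset _ k).trans hk))
        (by rw [excess_insert_erase hik hi1]; omega),
      ih _ (insert_subset hiI ((erase_subset _ _).trans hkt))
        (by rw [excess_insert_erase hik' hi1t', excess_erase ht]; omega)] at this
    linarith
  · have hi1t : i + 1 < t := lt_of_le_of_ne (by omega) fun h => hi1 (h ▸ ht)
    have hi1' : i + 1 ∉ k.erase t := fun h => hi1 (mem_of_mem_erase h)
    have hi_new : i ∉ insert (i + 1) (k.erase t) := by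
      simp only [mem_insert, not_or]
      exact ⟨by omega, hik'⟩
    have := hBZ2.add_le_of_notMem hk hiI hi1I (lt_add_one i) hi1t hik hi1 ht
    rw [hz_insert, ih _ (insert_subset hi1I hkt) (by rw [excess_insert_erase hi1 ht]; omega),
      ih _ (insert_subset hiI (insert_subset hi1I hkt)) (by
        rw [excess_insert hi_new, excess_insert_erase hi1 ht, card_insert_of_notMem hi1',
          Nat.cast_add, cast_card_erase_of_mem ht]
        omega)] at this
    linarith

lemma eBZ.eq_zero_of_forall_excess_lt (hM : eBZ n m M)
    (hz : ∀ i ∈ Icc (n + 1) (n + m), M (insert (i + 1) (Icc (n + 1) (i - 1))) = 0)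
    (hk : k ⊆ Itilde n m)
    (ih : ∀ k' ⊆ Itilde n m, excess (n + 1) k' < excess (n + 1) k → M k' = 0) : M k = 0 := by
  rcases k.eq_empty_or_nonempty with rfl | hne
  · exact hM.1
  have ht := k.max'_mem hne
  have hmax : ∀ x ∈ k, x ≤ k.max' hne := fun x hx => k.le_max' x hx
  have hlb : ∀ x ∈ k, n + 1 ≤ x := fun x hx => (mem_Itilde.mp (hk hx)).1
  by_cases hgap : (Icc (n + 1) (k.max' hne) \ k).Nonempty
  · obtain ⟨hi, hik⟩ := mem_sdiff.mp (min'_mem _ hgap)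
    obtain ⟨hni, hit⟩ := mem_Icc.mp hi
    refine hM.eq_zero_of_first_gap hz hk ht hmax hik hni
      (lt_of_le_of_ne hit fun h => hik (by rw [h]; exact ht)) ?_ ih
    intro x hx
    obtain ⟨hnx, hxi⟩ := mem_Ico.mp hx
    by_contra hxk
    exact hxi.not_ge <| min'_le _ x <| mem_sdiff.mpr ⟨mem_Icc.mpr ⟨hnx, hxi.le.trans hit⟩, hxk⟩
  · have hkI : k = Icc (n + 1) (k.max' hne) := (sdiff_eq_empty_iff_subset.mp
      (not_nonempty_iff_eq_empty.mp hgap)).antisymm' fun x hx => mem_Icc.mpr ⟨hlb x hx, hmax x hx⟩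
    rw [hkI]
    exact hM.apply_Icc_eq_zero (mem_Itilde.mp (hk ht)).2

end BZ

theorem stmt9_general (n m : ℤ) (M : Finset ℤ → ℤ) (hM : eBZ n m M)
    (hz : ∀ i ∈ Finset.Icc (n + 1) (n + m),
      M (insert (i + 1) (Finset.Icc (n + 1) (i - 1))) = 0) :
    ∀ k ⊆ Itilde n m, M k = 0 := by
  intro k hk
  induction hd : (excess (n + 1) k).toNat using Nat.strong_induction_on generalizing k with
  | _ d ih =>
    refine hM.eq_zero_of_forall_excess_lt hz hk fun k' hk' hlt => ih _ ?_ k' hk' rfl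
    have := excess_nonneg fun x hx => (mem_Itilde.mp (hk' hx)).1
    omega

/-- If ε_i(M) = 0 for all i ∈ I, then M vanishes on all Maya diagrams. -/
theorem stmt9 (n m : ℤ) (hm : 0 < m) (M : Finset ℤ → ℤ) (hM : eBZ n m M)
    (hz : ∀ i ∈ Finset.Icc (n + 1) (n + m),
      M (insert (i + 1) (Finset.Icc (n + 1) (i - 1))) = 0) :
    ∀ k ⊆ Itilde n m, M k = 0 :=
  stmt9_general n m M hM hz
end

section
/- Let M be an e-BZ datum on I = [n+1, n+m] and let i ∈ I with ε_i(M) := −M_{[n+1,i−1]∪{i+1}} > 0. Define the operator ẽ_i*M as the unique e-BZ datum with (ẽ_i*M)_{[i+1,n+m+1]} = M_{[i+1,n+m+1]} + 1, and (ẽ_i*M)_k = M_k for all Maya diagrams k with not (i ∉ k and i+1 ∈ k). Then N := (ẽ_i*(M^♯))^♯ satisfies: N_k = M_k + 1 for all k with i ∉ k and i+1 ∈ k, and N_k = M_k for all k such that i ∈ k ⇔ i+1 ∈ k. -/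
/-!
For `k ⊆ Ĩ` the complement `Ĩ ∖ k` reverses the pairing with each `h_j`, so
`(M^♯)_{Ĩ∖k} = M_k + ⟨wt^∨(M), k⟩`. The e-normalization makes `M^♯` agree with `M` on the
tails `[j+1, n+m+1]`, hence the tails of `E = ẽ_i*(M^♯)` are those of `M` except for a `+1`
at `j = i`, i.e. `wt^∨(E) = wt^∨(M) + h_i`. Whenever `E` agrees with `M^♯` on `Ĩ ∖ k`, this
gives `(E^♯)_k = M_k − ⟨h_i, k⟩`, and `⟨h_i, k⟩` is `−1` or `0` in the two cases of the theorem.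
-/

lemma mem_Itilde_of_mem_Icc {n m j : ℤ} (hj : j ∈ Finset.Icc (n + 1) (n + m)) :
    j ∈ Itilde n m ∧ j + 1 ∈ Itilde n m := by
  simp only [Finset.mem_Icc, Itilde] at hj ⊢
  omega

lemma Itilde_sdiff_Icc_succ {n m j : ℤ} (hj : j ∈ Finset.Icc (n + 1) (n + m)) :
    Itilde n m \ Finset.Icc (j + 1) (n + m + 1) = Finset.Icc (n + 1) j := by
  simp only [Finset.mem_Icc] at hj
  ext x
  simp only [Itilde, Finset.mem_sdiff, Finset.mem_Icc]
  omega

lemma pairH_Itilde_sdiff {n m j : ℤ} (hj : j ∈ Finset.Icc (n + 1) (n + m)) (k : Finset ℤ) :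
    pairH j (Itilde n m \ k) = -pairH j k := by
  obtain ⟨hjI, hj1I⟩ := mem_Itilde_of_mem_Icc hj
  unfold pairH
  by_cases h1 : j ∈ k <;> by_cases h2 : j + 1 ∈ k <;> simp [h1, h2, hjI, hj1I]

lemma wtv_Itilde_sdiff (n m : ℤ) (M : Finset ℤ → ℤ) (k : Finset ℤ) :
    wtv n m M (Itilde n m \ k) = -wtv n m M k := by
  rw [wtv, wtv, ← Finset.sum_neg_distrib]
  exact Finset.sum_congr rfl fun j hj => by rw [pairH_Itilde_sdiff hj k, mul_neg]

lemma sharp_Itilde_sdiff (n m : ℤ) (M : Finset ℤ → ℤ) {k : Finset ℤ} (hk : k ⊆ Itilde n m) :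
    sharp n m M (Itilde n m \ k) = M k + wtv n m M k := by
  rw [sharp, Finset.sdiff_sdiff_eq_self hk, wtv_Itilde_sdiff n m M k, sub_neg_eq_add]

lemma pairH_Icc_succ {n m l j : ℤ} (hl : l ∈ Finset.Icc (n + 1) (n + m))
    (hj : j ∈ Finset.Icc (n + 1) (n + m)) :
    pairH l (Finset.Icc (j + 1) (n + m + 1)) = if l = j then -1 else 0 := by
  simp only [Finset.mem_Icc] at hl hj
  simp only [pairH, Finset.mem_Icc]
  split_ifs <;> omega

lemma wtv_Icc_succ {n m j : ℤ} (M : Finset ℤ → ℤ) (hj : j ∈ Finset.Icc (n + 1) (n + m)) :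
    wtv n m M (Finset.Icc (j + 1) (n + m + 1)) = -M (Finset.Icc (j + 1) (n + m + 1)) := by
  rw [wtv, Finset.sum_eq_single_of_mem j hj]
  · simp [pairH_Icc_succ hj hj]
  · intro l hl hne
    simp [pairH_Icc_succ hl hj, hne]

lemma sharp_Icc_succ {n m j : ℤ} {M : Finset ℤ → ℤ} (hM : eNorm n m M)
    (hj : j ∈ Finset.Icc (n + 1) (n + m)) :
    sharp n m M (Finset.Icc (j + 1) (n + m + 1)) = M (Finset.Icc (j + 1) (n + m + 1)) := by
  rw [sharp, Itilde_sdiff_Icc_succ hj, hM j hj, wtv_Icc_succ M hj, zero_sub, neg_neg]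

lemma wtv_eq_add_pairH_of_Icc_succ {n m i : ℤ} {M E : Finset ℤ → ℤ}
    (hi : i ∈ Finset.Icc (n + 1) (n + m))
    (htail : ∀ j ∈ Finset.Icc (n + 1) (n + m),
      E (Finset.Icc (j + 1) (n + m + 1)) = M (Finset.Icc (j + 1) (n + m + 1)) + if j = i then 1 else 0)
    (k : Finset ℤ) : wtv n m E k = wtv n m M k + pairH i k := by
  calc wtv n m E k
      = ∑ j ∈ Finset.Icc (n + 1) (n + m),
          (M (Finset.Icc (j + 1) (n + m + 1)) * pairH j k + if j = i then pairH j k else 0) :=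
        Finset.sum_congr rfl fun j hj => by
          rw [htail j hj]
          split_ifs <;> ring
    _ = wtv n m M k + pairH i k := by
        rw [Finset.sum_add_distrib, Finset.sum_ite_eq' _ i, if_pos hi, wtv]

lemma apply_Icc_succ_eq_add_ite {n m i : ℤ} {M E : Finset ℤ → ℤ} (hM : eNorm n m M)
    (hE1 : E (Finset.Icc (i + 1) (n + m + 1)) = sharp n m M (Finset.Icc (i + 1) (n + m + 1)) + 1)
    (hE2 : ∀ k ⊆ Itilde n m, ¬(i ∉ k ∧ i + 1 ∈ k) → E k = sharp n m M k) :
    ∀ j ∈ Finset.Icc (n + 1) (n + m),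
      E (Finset.Icc (j + 1) (n + m + 1)) = M (Finset.Icc (j + 1) (n + m + 1)) + if j = i then 1 else 0 := by
  intro j hj
  by_cases hji : j = i
  · subst hji
    rw [hE1, sharp_Icc_succ hM hj, if_pos rfl]
  · have hsub : Finset.Icc (j + 1) (n + m + 1) ⊆ Itilde n m :=
      Finset.Icc_subset_Icc (by simp only [Finset.mem_Icc] at hj; omega) le_rfl
    have hcond : ¬(i ∉ Finset.Icc (j + 1) (n + m + 1) ∧ i + 1 ∈ Finset.Icc (j + 1) (n + m + 1)) := by
      simp only [Finset.mem_Icc]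
      omega
    rw [hE2 _ hsub hcond, sharp_Icc_succ hM hj, if_neg hji, add_zero]

lemma sharp_eq_sub_pairH {n m i : ℤ} {M E : Finset ℤ → ℤ} (hi : i ∈ Finset.Icc (n + 1) (n + m))
    (hM : eNorm n m M)
    (hE1 : E (Finset.Icc (i + 1) (n + m + 1)) = sharp n m M (Finset.Icc (i + 1) (n + m + 1)) + 1)
    (hE2 : ∀ k ⊆ Itilde n m, ¬(i ∉ k ∧ i + 1 ∈ k) → E k = sharp n m M k)
    {k : Finset ℤ} (hk : k ⊆ Itilde n m) (hik : ¬(i ∈ k ∧ i + 1 ∉ k)) :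
    sharp n m E k = M k - pairH i k := by
  obtain ⟨hiI, hi1I⟩ := mem_Itilde_of_mem_Icc hi
  have hcompl : E (Itilde n m \ k) = sharp n m M (Itilde n m \ k) :=
    hE2 _ Finset.sdiff_subset (by simpa [Finset.mem_sdiff, hiI, hi1I] using hik)
  rw [sharp, hcompl, sharp_Itilde_sdiff n m M hk,
    wtv_eq_add_pairH_of_Icc_succ hi (apply_Icc_succ_eq_add_ite hM hE1 hE2) k]
  ring

theorem stmt14_general (n m : ℤ) (M E : Finset ℤ → ℤ) (i : ℤ)
    (hi : i ∈ Finset.Icc (n + 1) (n + m)) (hM : eBZ n m M)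
    (hE1 : E (Finset.Icc (i + 1) (n + m + 1)) = sharp n m M (Finset.Icc (i + 1) (n + m + 1)) + 1)
    (hE2 : ∀ k ⊆ Itilde n m, ¬(i ∉ k ∧ i + 1 ∈ k) → E k = sharp n m M k) :
    (∀ k ⊆ Itilde n m, i ∉ k → i + 1 ∈ k → sharp n m E k = M k + 1) ∧
    (∀ k ⊆ Itilde n m, (i ∈ k ↔ i + 1 ∈ k) → sharp n m E k = M k) := by
  have hnorm : eNorm n m M := hM.2.2.2.2
  constructor
  · intro k hk hik hi1k
    rw [sharp_eq_sub_pairH hi hnorm hE1 hE2 hk (by tauto)]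
    simp [pairH, hik, hi1k]
  · intro k hk hiff
    rw [sharp_eq_sub_pairH hi hnorm hE1 hE2 hk (by tauto)]
    by_cases h : i ∈ k <;> simp [pairH, h, hiff.mp, mt hiff.mpr]

/-- If E = ẽ_i*(M^♯) (characterized as the unique e-BZ datum with the prescribed
components), then N = E^♯ satisfies N_k = M_k + 1 on ℳ(i)* and N_k = M_k off
ℳ(i) ∪ ℳ(i)*. -/
theorem stmt14 (n m : ℤ) (hm : 0 < m) (M E : Finset ℤ → ℤ) (i : ℤ)
    (hi : i ∈ Finset.Icc (n + 1) (n + m)) (hM : eBZ n m M)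
    (heps : 0 < -M (insert (i + 1) (Finset.Icc (n + 1) (i - 1))))
    (hE : eBZ n m E)
    (hE1 : E (Finset.Icc (i + 1) (n + m + 1)) = sharp n m M (Finset.Icc (i + 1) (n + m + 1)) + 1)
    (hE2 : ∀ k ⊆ Itilde n m, ¬(i ∉ k ∧ i + 1 ∈ k) → E k = sharp n m M k) :
    (∀ k ⊆ Itilde n m, i ∉ k → i + 1 ∈ k → sharp n m E k = M k + 1) ∧
    (∀ k ⊆ Itilde n m, (i ∈ k ↔ i + 1 ∈ k) → sharp n m E k = M k) :=
  stmt14_general n m M E i hi hM hE1 hE2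
end
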